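/- Let (X, ⊑, Y) be a polarity frame and R ⊆ X × X × X a ternary relation; for Galois stable sets A, C ⊆ X define A ⊚ C = cl(A ⊙ C). Then: (i) if R satisfies (C2) (∀x, z, z', x R z z' ⟺ x R z' z), then A ⊚ C = C ⊚ A for all Galois stable A, C; (ii) if R satisfies (C3) (∀x, z, z', x R z z' → z' ≼ x), then A ⊚ C ⊆ C for all Galois stable A, C; (iii) if R satisfies (C4) (∀x, x R x x), then A ∩ C ⊆ A ⊚ C for all Galois stable A, C. -/

import Mathlib

/-- The upper Galois polar `U^⊥ = {y : ∀ x ∈ U, x ⊑ y}`. -/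
def polar {X Y : Type*} (rel : X → Y → Prop) (U : Set X) : Set Y :=
  {y | ∀ x ∈ U, rel x y}

/-- The lower Galois polar `^⊥V = {x : ∀ y ∈ V, x ⊑ y}`. -/
def lpolar {X Y : Type*} (rel : X → Y → Prop) (V : Set Y) : Set X :=
  {x | ∀ y ∈ V, rel x y}

/-- The Galois closure `cl(U) = ^⊥(U^⊥)`. -/
def gcl {X Y : Type*} (rel : X → Y → Prop) (U : Set X) : Set X :=
  lpolar rel (polar rel U)

/-- `odot R U U' = {x : ∃ u ∈ U, ∃ u' ∈ U', x R u u'}`. -/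
def odot {X : Type*} (R : X → X → X → Prop) (U U' : Set X) : Set X :=
  {x | ∃ u ∈ U, ∃ u' ∈ U', R x u u'}

/-- The operation on stable sets: `A ⊚ C = cl(A ⊙ C)`. -/
def sodot {X Y : Type*} (rel : X → Y → Prop) (R : X → X → X → Prop)
    (A C : Set X) : Set X :=
  gcl rel (odot R A C)

/-- The preorder `≼` on `X` induced by the polarity. -/
def preceq {X Y : Type*} (rel : X → Y → Prop) (x z : X) : Prop :=
  ∀ y : Y, rel x y → rel z y

/- `polar` and `lpolar` are definitionally Mathlib's `upperPolar` and `lowerPolar`, so a Galois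
stable set is an `Order.IsExtent` and `gcl` is the least extent above a set. -/

open Order

section PolarityFrame

variable {X Y : Type*} {rel : X → Y → Prop} {R : X → X → X → Prop}

theorem Order.IsExtent.mem_of_preceq {s : Set X} (hs : IsExtent rel s) {x z : X}
    (hx : x ∈ s) (hxz : preceq rel x z) : z ∈ s := by
  obtain ⟨t, rfl⟩ := hs
  exact fun y hy => hxz y (hx hy)

theorem odot_comm (hR : ∀ x z z', R x z z' → R x z' z) (U V : Set X) :
    odot R U V = odot R V U :=
  Set.ext fun x =>
    ⟨fun ⟨u, hu, v, hv, h⟩ => ⟨v, hv, u, hu, hR x u v h⟩,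
      fun ⟨v, hv, u, hu, h⟩ => ⟨u, hu, v, hv, hR x v u h⟩⟩

theorem sodot_comm (hR : ∀ x z z', R x z z' → R x z' z) (U V : Set X) :
    sodot rel R U V = sodot rel R V U :=
  congrArg (gcl rel) (odot_comm hR U V)

theorem odot_subset_right (hR : ∀ x z z', R x z z' → preceq rel z' x) (U : Set X)
    {V : Set X} (hV : IsExtent rel V) : odot R U V ⊆ V :=
  fun x ⟨_, _, v, hv, h⟩ => hV.mem_of_preceq hv (hR x _ v h)

theorem sodot_subset_right (hR : ∀ x z z', R x z z' → preceq rel z' x) (U : Set X)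
    {V : Set X} (hV : IsExtent rel V) : sodot rel R U V ⊆ V :=
  hV.lowerPolar_upperPolar_subset (odot_subset_right hR U hV)

theorem inter_subset_odot (hR : ∀ x, R x x x) (U V : Set X) : U ∩ V ⊆ odot R U V :=
  fun x ⟨hU, hV⟩ => ⟨x, hU, x, hV, hR x⟩

theorem inter_subset_sodot (hR : ∀ x, R x x x) (U V : Set X) :
    U ∩ V ⊆ sodot rel R U V :=
  (inter_subset_odot hR U V).trans (subset_lowerPolar_upperPolar rel _)

end PolarityFrame

theorem sodot_properties_general {X Y : Type*}
    (rel : X → Y → Prop) (R : X → X → X → Prop) :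
    ((∀ x z z' : X, R x z z' ↔ R x z' z) →
      ∀ A C : Set X, gcl rel A = A → gcl rel C = C →
        sodot rel R A C = sodot rel R C A) ∧
    ((∀ x z z' : X, R x z z' → preceq rel z' x) →
      ∀ A C : Set X, gcl rel A = A → gcl rel C = C →
        sodot rel R A C ⊆ C) ∧
    ((∀ x : X, R x x x) →
      ∀ A C : Set X, gcl rel A = A → gcl rel C = C →
        A ∩ C ⊆ sodot rel R A C) :=
  ⟨fun hC2 A C _ _ => sodot_comm (fun x z z' => (hC2 x z z').1) A C,
    fun hC3 A _ _ hC => sodot_subset_right hC3 A (isExtent_iff.2 hC),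
    fun hC4 A C _ _ => inter_subset_sodot hC4 A C⟩

/-- (i) (C2) implies `⊚` is commutative on stable sets; (ii) (C3) implies
    `A ⊚ C ⊆ C` on stable sets; (iii) (C4) implies `A ∩ C ⊆ A ⊚ C` on stable sets. -/
theorem sodot_properties {X Y : Type*} [Nonempty X] [Nonempty Y]
    (rel : X → Y → Prop) (R : X → X → X → Prop) :
    ((∀ x z z' : X, R x z z' ↔ R x z' z) →
      ∀ A C : Set X, gcl rel A = A → gcl rel C = C →
        sodot rel R A C = sodot rel R C A) ∧
    ((∀ x z z' : X, R x z z' → preceq rel z' x) →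
      ∀ A C : Set X, gcl rel A = A → gcl rel C = C →
        sodot rel R A C ⊆ C) ∧
    ((∀ x : X, R x x x) →
      ∀ A C : Set X, gcl rel A = A → gcl rel C = C →
        A ∩ C ⊆ sodot rel R A C) :=
  sodot_properties_general rel R
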